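/- Let Φ : ℝ → ℝ be three times continuously differentiable with concave–convex flux on an interval I: there is r* ∈ I with Φ'''(r) < 0 for all r ∈ I with r < r* and Φ'''(r) > 0 for all r ∈ I with r > r*. Then every off-diagonal conservative shock with data in I is subsonic: if a, b ∈ I, a ≠ b and J(a,b) = 0, then σ(a,b) < Φ''(a) and σ(a,b) < Φ''(b). -/

import Mathlib

/-!
Let `b < a` and `J(a, b) = 0`. The derivative of `s ↦ J(s, b)` is `G(s) / 2` with
`G(s) = Φ'(s) - Φ'(b) - (s - b) Φ''(s)`, so `G(b) = 0` and `G'(s) = -(s - b) Φ'''(s)`: by the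
concave–convex hypothesis `G` increases up to `r*` and decreases after it. If `G(a) ≥ 0`, this
forces `G > 0` on `(b, a)`, contradicting Rolle's theorem for `J(b, b) = J(a, b)`. Hence `G(a) < 0`,
which is `σ(a, b) < Φ''(a)`. The same argument for `s ↦ J(a, s) = -J(s, a)`, whose derivative has
the same monotonicity pattern, gives `σ(a, b) < Φ''(b)`.
-/

/-- Conservative-shock function `J(a,b) = Φ(a) − Φ(b) − ((a−b)/2)·(Φ'(a) + Φ'(b))`. -/
noncomputable def consJ (Φ : ℝ → ℝ) (a b : ℝ) : ℝ :=
  Φ a - Φ b - ((a - b) / 2) * (deriv Φ a + deriv Φ b)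

/-- Rankine–Hugoniot (secant) slope `σ(a,b) = (Φ'(a) − Φ'(b))/(a − b)`. -/
noncomputable def rhSlope (Φ : ℝ → ℝ) (a b : ℝ) : ℝ :=
  (deriv Φ a - deriv Φ b) / (a - b)

open Set

section Unimodal

variable {g g' : ℝ → ℝ} {a b c : ℝ}

theorem pos_of_deriv_pos_then_neg (hg : ∀ t, HasDerivAt g (g' t) t)
    (hinc : ∀ t ∈ Ioo b a, t < c → 0 < g' t) (hdec : ∀ t ∈ Ioo b a, c < t → g' t < 0)
    (hb : 0 ≤ g b) (ha : 0 ≤ g a) {x : ℝ} (hx : x ∈ Ioo b a) : 0 < g x := by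
  have hcont : Continuous g := continuous_iff_continuousAt.2 fun t => (hg t).continuousAt
  rcases le_or_gt x c with hxc | hcx
  · obtain ⟨ξ, hξ, hslope⟩ :=
      exists_hasDerivAt_eq_slope g g' hx.1 hcont.continuousOn fun t _ => hg t
    have hpos : 0 < (g x - g b) / (x - b) :=
      hslope ▸ hinc ξ ⟨hξ.1, hξ.2.trans hx.2⟩ (hξ.2.trans_le hxc)
    have := (div_pos_iff_of_pos_right (sub_pos.2 hx.1)).1 hpos
    linarith
  · obtain ⟨ξ, hξ, hslope⟩ :=
      exists_hasDerivAt_eq_slope g g' hx.2 hcont.continuousOn fun t _ => hg t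
    have hneg : (g a - g x) / (a - x) < 0 :=
      hslope ▸ hdec ξ ⟨hx.1.trans hξ.1, hξ.2⟩ (hcx.trans hξ.1)
    have := (div_lt_iff₀ (sub_pos.2 hx.2)).1 hneg
    linarith

theorem deriv_neg_left_or_right_of_eq {F : ℝ → ℝ} (hF : ∀ t, HasDerivAt F (g t) t)
    (hg : ∀ t, HasDerivAt g (g' t) t) (hba : b < a) (hFab : F b = F a)
    (hinc : ∀ t ∈ Ioo b a, t < c → 0 < g' t) (hdec : ∀ t ∈ Ioo b a, c < t → g' t < 0) :
    g b < 0 ∨ g a < 0 := by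
  by_contra! h
  obtain ⟨ξ, hξ, hzero⟩ := exists_hasDerivAt_eq_zero hba
    (fun t _ => (hF t).continuousAt.continuousWithinAt) hFab fun t _ => hF t
  exact (pos_of_deriv_pos_then_neg hg hinc hdec h.1 h.2 hξ).ne' hzero

end Unimodal

theorem consJ_swap (Φ : ℝ → ℝ) (a b : ℝ) : consJ Φ b a = -consJ Φ a b := by
  simp only [consJ]
  ring

theorem consJ_self (Φ : ℝ → ℝ) (a : ℝ) : consJ Φ a a = 0 := by
  simp [consJ]

theorem rhSlope_comm (Φ : ℝ → ℝ) (a b : ℝ) : rhSlope Φ b a = rhSlope Φ a b := by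
  rw [rhSlope, rhSlope, ← neg_div_neg_eq, neg_sub, neg_sub]

section Shock

variable {Φ Φ'' Φ''' : ℝ → ℝ}

theorem hasDerivAt_consJ_left (hΦ : Differentiable ℝ Φ)
    (hΦ' : ∀ t, HasDerivAt (deriv Φ) (Φ'' t) t) (p t : ℝ) :
    HasDerivAt (fun s => consJ Φ s p) ((deriv Φ t - deriv Φ p - (t - p) * Φ'' t) / 2) t := by
  have := ((hΦ t).hasDerivAt.sub_const (Φ p)).sub
    ((((hasDerivAt_id' t).sub_const p).div_const 2).mul ((hΦ' t).add_const (deriv Φ p)))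
  refine this.congr_deriv ?_
  ring

theorem hasDerivAt_deriv_consJ_left (hΦ' : ∀ t, HasDerivAt (deriv Φ) (Φ'' t) t)
    (hΦ'' : ∀ t, HasDerivAt Φ'' (Φ''' t) t) (p t : ℝ) :
    HasDerivAt (fun s => (deriv Φ s - deriv Φ p - (s - p) * Φ'' s) / 2)
      (-(t - p) * Φ''' t / 2) t := by
  have := (((hΦ' t).sub_const (deriv Φ p)).sub
    (((hasDerivAt_id' t).sub_const p).mul (hΦ'' t))).div_const 2
  refine this.congr_deriv ?_
  ring

theorem rhSlope_lt_of_concave_convex (hΦ : Differentiable ℝ Φ)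
    (hΦ' : ∀ t, HasDerivAt (deriv Φ) (Φ'' t) t) (hΦ'' : ∀ t, HasDerivAt Φ'' (Φ''' t) t)
    {I : Set ℝ} (hI : I.OrdConnected) {rs : ℝ}
    (h1 : ∀ r ∈ I, r < rs → Φ''' r < 0) (h2 : ∀ r ∈ I, rs < r → 0 < Φ''' r)
    {a b : ℝ} (ha : a ∈ I) (hb : b ∈ I) (hba : b < a) (hJ : consJ Φ a b = 0) :
    rhSlope Φ a b < Φ'' a ∧ rhSlope Φ a b < Φ'' b := by
  have hmem : ∀ t ∈ Ioo b a, t ∈ I := fun t ht => hI.out hb ha (Ioo_subset_Icc_self ht)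
  have hG := deriv_neg_left_or_right_of_eq (hasDerivAt_consJ_left hΦ hΦ' b)
    (hasDerivAt_deriv_consJ_left hΦ' hΦ'' b) hba (by rw [consJ_self, hJ])
    (c := rs) (fun t ht htc => by nlinarith [h1 t (hmem t ht) htc, ht.1])
    (fun t ht htc => by nlinarith [h2 t (hmem t ht) htc, ht.1])
  have hH := deriv_neg_left_or_right_of_eq (F := fun s => -consJ Φ s a)
    (fun t => (hasDerivAt_consJ_left hΦ hΦ' a t).neg)
    (fun t => (hasDerivAt_deriv_consJ_left hΦ' hΦ'' a t).neg) hba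
    (by simp only [consJ_swap Φ a b, hJ, consJ_self, neg_zero])
    (c := rs) (fun t ht htc => by nlinarith [h1 t (hmem t ht) htc, ht.2])
    (fun t ht htc => by nlinarith [h2 t (hmem t ht) htc, ht.2])
  simp only [sub_self, zero_mul, zero_div, neg_zero, lt_irrefl, or_false, false_or] at hG hH
  rw [rhSlope, div_lt_iff₀ (sub_pos.2 hba), div_lt_iff₀ (sub_pos.2 hba)]
  constructor <;> nlinarith

end Shock

theorem stmt18_general (Φ : ℝ → ℝ) (hΦ : ContDiff ℝ 3 Φ)
    (I : Set ℝ) (hI : I.OrdConnected) (rs : ℝ)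
    (h1 : ∀ r ∈ I, r < rs → iteratedDeriv 3 Φ r < 0)
    (h2 : ∀ r ∈ I, rs < r → 0 < iteratedDeriv 3 Φ r)
    (a b : ℝ) (ha : a ∈ I) (hb : b ∈ I) (hab : a ≠ b) (hJ : consJ Φ a b = 0) :
    rhSlope Φ a b < iteratedDeriv 2 Φ a ∧ rhSlope Φ a b < iteratedDeriv 2 Φ b := by
  wlog hba : b < a generalizing a b
  · rw [← rhSlope_comm]
    exact (this b a hb ha hab.symm (by rw [consJ_swap, hJ, neg_zero])
      (hab.lt_or_gt.resolve_right hba)).symm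
  have hd : ∀ m : ℕ, m < 3 → ∀ t, HasDerivAt (iteratedDeriv m Φ) (iteratedDeriv (m + 1) Φ t) t :=
    fun m hm t => by
      rw [iteratedDeriv_succ]
      exact (hΦ.differentiable_iteratedDeriv m (by exact_mod_cast hm) t).hasDerivAt
  have h1d : ∀ t, HasDerivAt (deriv Φ) (iteratedDeriv 2 Φ t) t := by
    simpa only [iteratedDeriv_one] using hd 1 (by norm_num)
  exact rhSlope_lt_of_concave_convex (hΦ.differentiable (by norm_num)) h1d (hd 2 (by norm_num))
    hI h1 h2 ha hb hba hJ

theorem stmt18 (Φ : ℝ → ℝ) (hΦ : ContDiff ℝ 3 Φ)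
    (I : Set ℝ) (hI : I.OrdConnected) (rs : ℝ) (hrs : rs ∈ I)
    (h1 : ∀ r ∈ I, r < rs → iteratedDeriv 3 Φ r < 0)
    (h2 : ∀ r ∈ I, rs < r → 0 < iteratedDeriv 3 Φ r)
    (a b : ℝ) (ha : a ∈ I) (hb : b ∈ I) (hab : a ≠ b) (hJ : consJ Φ a b = 0) :
    rhSlope Φ a b < iteratedDeriv 2 Φ a ∧ rhSlope Φ a b < iteratedDeriv 2 Φ b :=
  stmt18_general Φ hΦ I hI rs h1 h2 a b ha hb hab hJ
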